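/- arXiv:2602.09405 — 2 statements merged into one kernel-verified Lean document; each statement's English description precedes it below -/
import Mathlib

section
/- Tweedie's formula: let p be a probability density on ℝⁿ with ∫_{ℝⁿ} ‖z‖·p(z) dz < ∞, let σ² > 0, let φ_{σ²}(z) = (2πσ²)^{−n/2}·exp(−‖z‖²/(2σ²)) be the density of N(0, σ²·I_n), and let p_{σ²} = p * φ_{σ²} be the convolution. Then p_{σ²} is everywhere positive and differentiable, and for every y ∈ ℝⁿ the posterior mean satisfies (∫_{ℝⁿ} z·φ_{σ²}(y − z)·p(z) dz) / p_{σ²}(y) = y + σ²·∇log p_{σ²}(y). -/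
open MeasureTheory ProbabilityTheory Filter Set

noncomputable section

/-- Squared Euclidean norm of a vector in `Fin k → ℝ`. -/
def sqNorm {k : ℕ} (v : Fin k → ℝ) : ℝ := ∑ i, (v i) ^ 2

/-- Density of `N(0, t·I_n)` on `Fin n → ℝ`. -/
def gaussDensity {n : ℕ} (t : ℝ) (z : Fin n → ℝ) : ℝ :=
  (2 * Real.pi * t) ^ (-(n : ℝ) / 2) * Real.exp (-sqNorm z / (2 * t))

/-- Convolution `p_t = p * φ_t` of a density with the Gaussian density `φ_t`. -/
def pConv {n : ℕ} (p : (Fin n → ℝ) → ℝ) (t : ℝ) (y : Fin n → ℝ) : ℝ :=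
  ∫ z, p z * gaussDensity t (y - z)

/-! Since `φ_t` and its gradient `∇φ_t(w) = -(w / t) φ_t(w)` are bounded and continuous, one may
differentiate `p_t = p * φ_t` under the integral sign: `t ∇p_t(y) = ∫ (z - y) φ_t(y - z) p(z) dz`.
Dividing by `p_t(y)`, which is positive because `φ_t > 0` and `p` has positive mass, gives the
formula, as `∇ log p_t = ∇p_t / p_t`. -/

open Real

variable {n : ℕ}

lemma sqNorm_nonneg (v : Fin n → ℝ) : 0 ≤ sqNorm v :=
  Finset.sum_nonneg fun i _ ↦ sq_nonneg (v i)

lemma sq_apply_le_sqNorm (v : Fin n → ℝ) (i : Fin n) : v i ^ 2 ≤ sqNorm v :=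
  Finset.single_le_sum (fun j _ ↦ sq_nonneg (v j)) (Finset.mem_univ i)

lemma hasFDerivAt_sqNorm (w : Fin n → ℝ) :
    HasFDerivAt sqNorm
      (∑ i, (2 * w i) • ContinuousLinearMap.proj (R := ℝ) (φ := fun _ : Fin n ↦ ℝ) i) w := by
  refine HasFDerivAt.fun_sum fun i _ ↦ ?_
  simpa using (ContinuousLinearMap.proj (R := ℝ) (φ := fun _ : Fin n ↦ ℝ) i).hasFDerivAt.pow 2

lemma abs_mul_exp_neg_sq_div_le {t : ℝ} (ht : 0 < t) (x : ℝ) :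
    |x| * exp (-x ^ 2 / (2 * t)) ≤ t / 2 + 1 := by
  -- `|x| ≤ t / 2 + s ≤ (t / 2 + 1) (1 + s) ≤ (t / 2 + 1) eˢ` with `s = x² / 2t`
  have hx : |x| ≤ t / 2 + x ^ 2 / (2 * t) := by
    rw [show t / 2 + x ^ 2 / (2 * t) = (x ^ 2 + t ^ 2) / (2 * t) by field_simp; ring,
      le_div_iff₀' (by positivity)]
    nlinarith [sq_nonneg (|x| - t), sq_abs x]
  set s := x ^ 2 / (2 * t)
  have hs : 0 ≤ s := by positivity
  have hexp : |x| ≤ (t / 2 + 1) * exp s := by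
    nlinarith [add_one_le_exp s]
  calc |x| * exp (-x ^ 2 / (2 * t)) = |x| * (exp s)⁻¹ := by rw [neg_div, exp_neg]
    _ ≤ t / 2 + 1 := by rw [← div_eq_mul_inv, div_le_iff₀ (exp_pos s)]; exact hexp

lemma gaussDensity_pos {t : ℝ} (ht : 0 < t) (w : Fin n → ℝ) : 0 < gaussDensity t w := by
  unfold gaussDensity; positivity

lemma norm_gaussDensity_le {t : ℝ} (ht : 0 < t) (w : Fin n → ℝ) :
    ‖gaussDensity t w‖ ≤ (2 * π * t) ^ (-(n : ℝ) / 2) := by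
  rw [Real.norm_of_nonneg (gaussDensity_pos ht w).le]
  refine mul_le_of_le_one_right (by positivity) (exp_le_one_iff.2 ?_)
  rw [neg_div]; exact neg_nonpos.2 (div_nonneg (sqNorm_nonneg w) (by positivity))

lemma abs_apply_mul_gaussDensity_le {t : ℝ} (ht : 0 < t) (w : Fin n → ℝ) (i : Fin n) :
    |w i| * gaussDensity t w ≤ (2 * π * t) ^ (-(n : ℝ) / 2) * (t / 2 + 1) := by
  have hexp : exp (-sqNorm w / (2 * t)) ≤ exp (-w i ^ 2 / (2 * t)) := by
    gcongr; exact sq_apply_le_sqNorm w i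
  calc |w i| * gaussDensity t w
      ≤ (2 * π * t) ^ (-(n : ℝ) / 2) * (|w i| * exp (-w i ^ 2 / (2 * t))) := by
        rw [gaussDensity, mul_left_comm]; gcongr
    _ ≤ _ := by gcongr; exact abs_mul_exp_neg_sq_div_le ht (w i)

lemma continuous_gaussDensity (t : ℝ) : Continuous (gaussDensity (n := n) t) := by
  unfold gaussDensity sqNorm; fun_prop

def gaussDensityFDeriv (t : ℝ) (w : Fin n → ℝ) : (Fin n → ℝ) →L[ℝ] ℝ :=
  ∑ i, (-(w i * gaussDensity t w) / t) • ContinuousLinearMap.proj (R := ℝ) (φ := fun _ ↦ ℝ) i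

lemma gaussDensityFDeriv_apply_single (t : ℝ) (w : Fin n → ℝ) (i : Fin n) :
    gaussDensityFDeriv t w (Pi.single i 1) = -(w i * gaussDensity t w) / t := by
  simp [gaussDensityFDeriv, Pi.single_apply]

lemma continuous_gaussDensityFDeriv (t : ℝ) : Continuous (gaussDensityFDeriv (n := n) t) := by
  have := continuous_gaussDensity (n := n) t
  unfold gaussDensityFDeriv; fun_prop

lemma norm_gaussDensityFDeriv_le {t : ℝ} (ht : 0 < t) (w : Fin n → ℝ) :
    ‖gaussDensityFDeriv t w‖ ≤ n * ((2 * π * t) ^ (-(n : ℝ) / 2) * (t / 2 + 1) / t) := by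
  have hproj (i : Fin n) : ‖ContinuousLinearMap.proj (R := ℝ) (φ := fun _ : Fin n ↦ ℝ) i‖ ≤ 1 :=
    ContinuousLinearMap.opNorm_le_bound _ zero_le_one fun v ↦ by
      simpa using norm_le_pi_norm v i
  calc ‖gaussDensityFDeriv t w‖
      ≤ ∑ i, ‖-(w i * gaussDensity t w) / t‖ * 1 :=
        (norm_sum_le _ _).trans <| Finset.sum_le_sum fun i _ ↦
          (norm_smul_le _ _).trans (mul_le_mul_of_nonneg_left (hproj i) (norm_nonneg _))
    _ ≤ ∑ _i : Fin n, (2 * π * t) ^ (-(n : ℝ) / 2) * (t / 2 + 1) / t := by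
        gcongr with i
        rw [mul_one, norm_div, norm_neg, Real.norm_of_nonneg ht.le, norm_mul, Real.norm_eq_abs,
          Real.norm_of_nonneg (gaussDensity_pos ht w).le]
        exact div_le_div_of_nonneg_right (abs_apply_mul_gaussDensity_le ht w i) ht.le
    _ = _ := by simp

lemma hasFDerivAt_gaussDensity {t : ℝ} (ht : 0 < t) (w : Fin n → ℝ) :
    HasFDerivAt (gaussDensity t) (gaussDensityFDeriv t w) w := by
  have := (((hasFDerivAt_sqNorm w).fun_neg.mul_const (2 * t)⁻¹).exp).const_mul
    ((2 * π * t) ^ (-(n : ℝ) / 2))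
  have hfun : gaussDensity (n := n) t =
      fun z ↦ (2 * π * t) ^ (-(n : ℝ) / 2) * exp (-sqNorm z * (2 * t)⁻¹) := by
    funext z; simp only [gaussDensity, div_eq_mul_inv]
  rw [hfun]
  refine this.congr_fderiv ?_
  ext v
  simp only [gaussDensityFDeriv, gaussDensity, smul_apply, neg_apply, FunLike.coe_sum,
    Finset.sum_apply, ContinuousLinearMap.proj_apply, smul_eq_mul, Finset.mul_sum,
    ← Finset.sum_neg_distrib]
  refine Finset.sum_congr rfl fun j _ ↦ ?_
  rw [show -sqNorm w / (2 * t) = -sqNorm w * (2 * t)⁻¹ by ring]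
  field_simp

section KernelIntegral

variable {E F : Type*} [NormedAddCommGroup E] [MeasurableSpace E]
  [BorelSpace E] [SecondCountableTopology E] [NormedAddCommGroup F] [NormedSpace ℝ F]
  {μ : Measure E} {p : E → ℝ}

lemma MeasureTheory.Integrable.smul_comp_sub_of_bounded (hp : Integrable p μ) {f : E → F}
    (hf : Continuous f) {C : ℝ} (hfC : ∀ w, ‖f w‖ ≤ C) (y : E) :
    Integrable (fun z ↦ p z • f (y - z)) μ :=
  hp.smul_bdd C (hf.comp (continuous_sub_left y)).aestronglyMeasurable
    (Eventually.of_forall fun z ↦ hfC (y - z))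

lemma integral_mul_comp_sub_pos (hp : Integrable p μ) (hp_nonneg : ∀ z, 0 ≤ p z)
    (hp_pos : 0 < ∫ z, p z ∂μ) {K : E → ℝ} (hK : Continuous K) (hK_pos : ∀ w, 0 < K w)
    {C : ℝ} (hKC : ∀ w, ‖K w‖ ≤ C) (y : E) : 0 < ∫ z, p z * K (y - z) ∂μ := by
  have hsupp : Function.support (fun z ↦ p z * K (y - z)) = Function.support p := by
    ext z; simp [(hK_pos (y - z)).ne']
  rw [integral_pos_iff_support_of_nonneg (fun z ↦ mul_nonneg (hp_nonneg z) (hK_pos _).le)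
    (hp.smul_comp_sub_of_bounded hK hKC y), hsupp]
  exact (integral_pos_iff_support_of_nonneg hp_nonneg hp).1 hp_pos

lemma hasFDerivAt_integral_mul_comp_sub [NormedSpace ℝ E] (hp : Integrable p μ) {K : E → ℝ}
    {K' : E → E →L[ℝ] ℝ} (hK : ∀ w, HasFDerivAt K (K' w) w) (hK' : Continuous K') {B C : ℝ}
    (hKB : ∀ w, ‖K w‖ ≤ B) (hK'C : ∀ w, ‖K' w‖ ≤ C) (y : E) :
    HasFDerivAt (fun x ↦ ∫ z, p z * K (x - z) ∂μ) (∫ z, p z • K' (y - z) ∂μ) y := by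
  have hKcont : Continuous K := continuous_iff_continuousAt.2 fun w ↦ (hK w).continuousAt
  refine hasFDerivAt_integral_of_dominated_of_fderiv_le (F' := fun x z ↦ p z • K' (x - z))
    (bound := fun z ↦ ‖p z‖ * C)
    univ_mem (Eventually.of_forall fun x ↦ (hp.smul_comp_sub_of_bounded hKcont hKB x).1)
    (hp.smul_comp_sub_of_bounded hKcont hKB y) (hp.smul_comp_sub_of_bounded hK' hK'C y).1
    (Eventually.of_forall fun z x _ ↦ ?_) (hp.norm.mul_const C)
    (Eventually.of_forall fun z x _ ↦ ?_)
  · exact (norm_smul_le _ _).trans (mul_le_mul_of_nonneg_left (hK'C _) (norm_nonneg _))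
  · simpa using ((hK (x - z)).comp x ((hasFDerivAt_id x).sub_const z)).const_mul (p z)

end KernelIntegral

variable {p : (Fin n → ℝ) → ℝ} {t : ℝ}

lemma pConv_pos (hp : Integrable p) (hp_nonneg : ∀ z, 0 ≤ p z) (hp_one : ∫ z, p z = 1)
    (ht : 0 < t) (y : Fin n → ℝ) : 0 < pConv p t y :=
  integral_mul_comp_sub_pos hp hp_nonneg (hp_one ▸ one_pos) (continuous_gaussDensity t)
    (gaussDensity_pos ht) (norm_gaussDensity_le ht) y

lemma integrable_mul_gaussDensity_sub (hp : Integrable p) (ht : 0 < t) (y : Fin n → ℝ) :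
    Integrable (fun z ↦ p z * gaussDensity t (y - z)) :=
  hp.smul_comp_sub_of_bounded (continuous_gaussDensity t) (norm_gaussDensity_le ht) y

lemma hasFDerivAt_pConv (hp : Integrable p) (ht : 0 < t) (y : Fin n → ℝ) :
    HasFDerivAt (pConv p t) (∫ z, p z • gaussDensityFDeriv t (y - z)) y :=
  hasFDerivAt_integral_mul_comp_sub hp (hasFDerivAt_gaussDensity ht)
    (continuous_gaussDensityFDeriv t)
    (norm_gaussDensity_le ht) (norm_gaussDensityFDeriv_le ht) y

lemma integral_apply_mul_gaussDensity_mul (hp : Integrable p) (ht : 0 < t) (y : Fin n → ℝ)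
    (i : Fin n) :
    ∫ z, z i * (gaussDensity t (y - z) * p z) =
      y i * pConv p t y + t * (∫ z, p z • gaussDensityFDeriv t (y - z)) (Pi.single i 1) := by
  have hcoord : Integrable (fun z ↦ p z * ((y - z) i * gaussDensity t (y - z))) :=
    hp.smul_comp_sub_of_bounded (f := fun w ↦ w i * gaussDensity t w)
      ((continuous_apply i).mul (continuous_gaussDensity t))
      (fun w ↦ by
        rw [norm_mul, Real.norm_eq_abs, Real.norm_of_nonneg (gaussDensity_pos ht w).le]
        exact abs_apply_mul_gaussDensity_le ht w i) y
  have hscore : t * (∫ z, p z • gaussDensityFDeriv t (y - z)) (Pi.single i 1) =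
      -∫ z, p z * ((y - z) i * gaussDensity t (y - z)) := by
    rw [ContinuousLinearMap.integral_apply (hp.smul_comp_sub_of_bounded
      (continuous_gaussDensityFDeriv t) (norm_gaussDensityFDeriv_le ht) y),
      ← integral_const_mul, ← integral_neg]
    congr 1; ext z
    rw [smul_apply, gaussDensityFDeriv_apply_single, smul_eq_mul]
    field_simp
  rw [hscore, pConv, ← integral_const_mul, ← sub_eq_add_neg,
    ← integral_sub ((integrable_mul_gaussDensity_sub hp ht y).const_mul (y i)) hcoord]
  congr 1; ext z
  rw [Pi.sub_apply]
  ring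

theorem stmt_12_general {n : ℕ}
    (p : (Fin n → ℝ) → ℝ) (hpnn : ∀ z, 0 ≤ p z)
    (hpint : Integrable p) (hpone : ∫ z, p z = 1)
    (t : ℝ) (ht : 0 < t) :
    (∀ y, 0 < pConv p t y) ∧ Differentiable ℝ (pConv p t) ∧
      ∀ (y : Fin n → ℝ) (i : Fin n),
        (∫ z, z i * (gaussDensity t (y - z) * p z)) / pConv p t y =
          y i + t * fderiv ℝ (fun w => Real.log (pConv p t w)) y (Pi.single i 1) := by
  have hpos := pConv_pos hpint hpnn hpone ht
  refine ⟨hpos, fun y ↦ (hasFDerivAt_pConv hpint ht y).differentiableAt, fun y i ↦ ?_⟩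
  rw [((hasFDerivAt_pConv hpint ht y).log (hpos y).ne').fderiv, smul_apply, smul_eq_mul,
    integral_apply_mul_gaussDensity_mul hpint ht y i, add_div,
    mul_div_cancel_right₀ _ (hpos y).ne', mul_div_assoc, div_eq_inv_mul]

/-- Tweedie's formula.  For a probability density `p` on `ℝⁿ` with finite first
moment and `t = σ² > 0`, the smoothed density `p_t = p * φ_t` is positive and differentiable,
and the posterior mean satisfies
`(∫ z·φ_t(y−z)·p(z) dz)/p_t(y) = y + t·∇ log p_t(y)` for every `y`. -/
theorem stmt_12 {n : ℕ} (hn : 1 ≤ n)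
    (p : (Fin n → ℝ) → ℝ) (hpmeas : Measurable p) (hpnn : ∀ z, 0 ≤ p z)
    (hpint : Integrable p) (hpone : ∫ z, p z = 1)
    (hmom : Integrable (fun z => Real.sqrt (sqNorm z) * p z))
    (t : ℝ) (ht : 0 < t) :
    (∀ y, 0 < pConv p t y) ∧ Differentiable ℝ (pConv p t) ∧
      ∀ (y : Fin n → ℝ) (i : Fin n),
        (∫ z, z i * (gaussDensity t (y - z) * p z)) / pConv p t y =
          y i + t * fderiv ℝ (fun w => Real.log (pConv p t w)) y (Pi.single i 1) :=
  stmt_12_general p hpnn hpint hpone t ht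
end
end

section
/- Let d ≥ n ≥ 1, let X ∈ ℝ^{n×d} have full row rank n, let η ∈ (0,1], let K be an integer with 1 ≤ K ≤ d, and let S ⊆ {1,…,d} with |S| = K. Define Ω_S = ((1−η)/K)·Σ_{i∈S} e_ie_iᵀ + (η/d)·I_d. Then (1/n)·log det(X·Ω_S·Xᵀ) ≤ (1 − K/n)·log η + (K/n)·log(d/K) + (1/n)·log det(X·Xᵀ/d). -/
open Matrix

noncomputable section

/-- The perturbed `K`-sparse covariance `Ω_S = ((1−η)/K)·Σ_{i∈S} eᵢeᵢᵀ + (η/d)·I_d`. -/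
def OmegaS {d : ℕ} (η : ℝ) (K : ℕ) (S : Finset (Fin d)) : Matrix (Fin d) (Fin d) ℝ :=
  ((1 - η) / (K : ℝ)) • Matrix.diagonal (fun j => if j ∈ S then (1 : ℝ) else 0) +
    (η / (d : ℝ)) • (1 : Matrix (Fin d) (Fin d) ℝ)

/-!
Write `G = X Xᵀ` and let `Y` be the `n × K` matrix of the columns of `X` indexed by `S`, so that
`X Ω_S Xᵀ = (η/d) G + ((1-η)/K) Y Yᵀ`. The matrix determinant lemma gives
`det (X Ω_S Xᵀ) = (η/d)^n det G · det (1 + t H)` with `t = d(1-η)/(Kη)` and `H = Yᵀ G⁻¹ Y`.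
`H` is a `K × K` compression of the orthogonal projection `Xᵀ G⁻¹ X` onto the row space of `X`,
so `0 ≤ H ≤ 1`, whence `det (1 + t H) ≤ (1 + t)^K ≤ (d/(Kη))^K`. Taking logarithms gives the bound.
-/

namespace Matrix

variable {m n ι : Type*} [Fintype m] [Fintype n] [DecidableEq m] [DecidableEq n]

theorem isUnit_of_rank_eq_card {K : Type*} [Field K] {A : Matrix m m K}
    (h : A.rank = Fintype.card m) : IsUnit A := by
  have hrange : LinearMap.range A.mulVecLin = ⊤ :=
    Submodule.eq_top_of_finrank_eq (by rw [Module.finrank_fintype_fun_eq_card]; exact h)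
  exact mulVec_surjective_iff_isUnit.mp (LinearMap.range_eq_top.mp hrange)

omit [DecidableEq n] in
theorem posDef_mul_transpose_of_rank_eq_card {A : Matrix m n ℝ}
    (h : A.rank = Fintype.card m) : (A * Aᵀ).PosDef := by
  have hpsd : (A * Aᵀ).PosSemidef := by
    simpa using posSemidef_self_mul_conjTranspose A
  exact hpsd.posDef_iff_isUnit.mpr (isUnit_of_rank_eq_card (by rw [rank_self_mul_transpose, h]))

theorem posSemidef_one_sub_transpose_mul_inv_mul {A : Matrix m n ℝ} (hA : IsUnit (A * Aᵀ).det) :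
    (1 - Aᵀ * (A * Aᵀ)⁻¹ * A).PosSemidef := by
  set P := Aᵀ * (A * Aᵀ)⁻¹ * A
  have hP_symm : Pᵀ = P := by
    simp [P, transpose_nonsing_inv, Matrix.mul_assoc]
  have hP_idem : P * P = P := by
    simp only [P, Matrix.mul_assoc]
    rw [← Matrix.mul_assoc A, ← Matrix.mul_assoc _ (A * Aᵀ), nonsing_inv_mul _ hA, Matrix.one_mul]
  have h := posSemidef_conjTranspose_mul_self (1 - P)
  rwa [conjTranspose_eq_transpose_of_trivial, transpose_sub, transpose_one, hP_symm, sub_mul,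
    one_mul, mul_sub, mul_one, hP_idem, sub_self, sub_zero] at h

theorem posSemidef_one_sub_submatrix_transpose_mul_inv_mul [DecidableEq ι] {A : Matrix m n ℝ}
    (hA : IsUnit (A * Aᵀ).det) {f : ι → n} (hf : Function.Injective f) :
    (1 - (A.submatrix id f)ᵀ * (A * Aᵀ)⁻¹ * A.submatrix id f).PosSemidef := by
  have h := (posSemidef_one_sub_transpose_mul_inv_mul hA).submatrix f
  rwa [submatrix_sub, Pi.sub_apply, Pi.sub_apply, submatrix_one _ hf,
    submatrix_mul _ _ _ id _ Function.bijective_id,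
    submatrix_mul _ _ _ id _ Function.bijective_id] at h

theorem IsHermitian.eigenvalues_le {A : Matrix n n ℝ} (hA : A.IsHermitian) {c : ℝ}
    (h : (c • 1 - A).PosSemidef) (i : n) : hA.eigenvalues i ≤ c := by
  rw [hA.eigenvalues_eq]
  set v := hA.eigenvectorBasis i
  have hv : v ⬝ᵥ v = 1 := by
    have h_inner : inner ℝ v v = 1 := by
      rw [real_inner_self_eq_norm_sq, hA.eigenvectorBasis.orthonormal.1 i, one_pow]
    rw [EuclideanSpace.inner_eq_star_dotProduct] at h_inner
    simpa using h_inner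
  have h_quad := h.dotProduct_mulVec_nonneg v
  simp only [sub_mulVec, smul_mulVec, one_mulVec, dotProduct_sub, dotProduct_smul, star_trivial,
    smul_eq_mul, hv, mul_one, sub_nonneg] at h_quad
  simpa using h_quad

theorem PosSemidef.det_le_pow {A : Matrix n n ℝ} (hA : A.PosSemidef) {c : ℝ}
    (h : (c • 1 - A).PosSemidef) : A.det ≤ c ^ Fintype.card n := by
  rw [hA.1.det_eq_prod_eigenvalues, ← Finset.card_univ, ← Finset.prod_const]
  exact Finset.prod_le_prod (fun i _ => hA.eigenvalues_nonneg i)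
    (fun i _ => hA.1.eigenvalues_le h i)

theorem det_one_add_smul_le_pow {H : Matrix n n ℝ} (hH : H.PosSemidef) (hH1 : (1 - H).PosSemidef)
    {t : ℝ} (ht : 0 ≤ t) : (1 + t • H).det ≤ (1 + t) ^ Fintype.card n := by
  refine (PosSemidef.one.add (hH.smul ht)).det_le_pow ?_
  rw [show (1 + t) • 1 - (1 + t • H) = t • (1 - H) by module]
  exact hH1.smul ht

omit [Fintype m] [DecidableEq m] in
theorem mul_diagonal_indicator_mul_transpose {R : Type*} [CommSemiring R] (A : Matrix m n R)
    (S : Finset n) :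
    A * diagonal (fun j => if j ∈ S then (1 : R) else 0) * Aᵀ =
      A.submatrix id ((↑) : S → n) * (A.submatrix id ((↑) : S → n))ᵀ := by
  ext i k
  rw [mul_apply, mul_apply]
  simp only [mul_diagonal, submatrix_apply, transpose_apply, id, mul_ite, mul_one, mul_zero,
    ite_mul, zero_mul]
  rw [Finset.sum_ite_mem, Finset.univ_inter, Finset.sum_coe_sort S (fun j => A i j * A k j)]

theorem det_smul_mul_transpose_add_smul {K : Type*} [Field K] [Fintype ι] [DecidableEq ι]
    {G : Matrix m m K} (hG : IsUnit G.det) {b : K} (hb : b ≠ 0) (a : K) (Y : Matrix m ι K) :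
    (a • (Y * Yᵀ) + b • G).det =
      b ^ Fintype.card m * G.det * (1 + (a / b) • (Yᵀ * G⁻¹ * Y)).det := by
  have hbG : IsUnit (b • G).det := by
    rw [det_smul]; exact (isUnit_iff_ne_zero.mpr (pow_ne_zero _ hb)).mul hG
  have : Invertible b := invertibleOfNonzero hb
  rw [add_comm, ← Matrix.mul_smul, det_add_mul _ _ hbG, det_smul, inv_smul G b hG, invOf_eq_inv]
  simp only [Matrix.smul_mul, Matrix.mul_smul, smul_smul, div_eq_inv_mul]

end Matrix

theorem mul_OmegaS_mul_transpose {n d : ℕ} (X : Matrix (Fin n) (Fin d) ℝ) (η : ℝ) (K : ℕ)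
    (S : Finset (Fin d)) :
    X * OmegaS η K S * Xᵀ =
      ((1 - η) / K) • (X.submatrix id ((↑) : S → Fin d) * (X.submatrix id ((↑) : S → Fin d))ᵀ) +
        (η / d) • (X * Xᵀ) := by
  rw [OmegaS, Matrix.mul_add, Matrix.add_mul, Matrix.mul_smul, Matrix.smul_mul,
    mul_diagonal_indicator_mul_transpose, Matrix.mul_smul, Matrix.smul_mul, Matrix.mul_one]

theorem det_mul_OmegaS_mul_transpose_le {n d : ℕ} {X : Matrix (Fin n) (Fin d) ℝ}
    (hG : (X * Xᵀ).PosDef) {η : ℝ} (hη0 : 0 < η) (hη1 : η ≤ 1) {K : ℕ} (hK1 : 1 ≤ K) (hKd : K ≤ d)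
    {S : Finset (Fin d)} (hScard : S.card = K) :
    0 < (X * OmegaS η K S * Xᵀ).det ∧
      (X * OmegaS η K S * Xᵀ).det ≤ (η / d) ^ n * (X * Xᵀ).det * (d / (K * η)) ^ K := by
  set Y := X.submatrix id ((↑) : S → Fin d)
  set H := Yᵀ * (X * Xᵀ)⁻¹ * Y
  set t := (1 - η) / K / (η / d)
  have hGdet := hG.det_pos
  have hK : (0 : ℝ) < K := by exact_mod_cast hK1
  have hd : (0 : ℝ) < d := by exact_mod_cast hK1.trans hKd
  have ht : 0 ≤ t := div_nonneg (div_nonneg (by linarith) hK.le) (by positivity)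
  have hH : H.PosSemidef := by
    simpa using hG.posSemidef.inv.conjTranspose_mul_mul_same Y
  have hH1 : (1 - H).PosSemidef :=
    posSemidef_one_sub_submatrix_transpose_mul_inv_mul hGdet.ne'.isUnit Subtype.val_injective
  have hdet : (X * OmegaS η K S * Xᵀ).det = (η / d) ^ n * (X * Xᵀ).det * (1 + t • H).det := by
    rw [mul_OmegaS_mul_transpose,
      det_smul_mul_transpose_add_smul hGdet.ne'.isUnit (by positivity), Fintype.card_fin]
  have ht_le : 1 + t ≤ d / (K * η) := by
    rw [le_div_iff₀ (by positivity)]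
    have : t * (K * η) = d * (1 - η) := by simp only [t]; field_simp
    nlinarith [mul_le_mul_of_nonneg_right (show (K : ℝ) ≤ d by exact_mod_cast hKd) hη0.le]
  rw [hdet]
  constructor
  · have := (PosDef.one.add_posSemidef (hH.smul ht)).det_pos
    positivity
  · refine mul_le_mul_of_nonneg_left ?_ (by positivity)
    calc (1 + t • H).det ≤ (1 + t) ^ K := by
          simpa [hScard] using det_one_add_smul_le_pow hH hH1 ht
      _ ≤ (d / (K * η)) ^ K := by gcongr

theorem stmt_17_general {n d : ℕ} (hn : 1 ≤ n)
    (X : Matrix (Fin n) (Fin d) ℝ) (hX : X.rank = n)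
    (η : ℝ) (hη0 : 0 < η) (hη1 : η ≤ 1)
    (K : ℕ) (hK1 : 1 ≤ K) (hKd : K ≤ d)
    (S : Finset (Fin d)) (hScard : S.card = K) :
    (1 / (n : ℝ)) * Real.log (X * OmegaS η K S * Xᵀ).det ≤
      (1 - (K : ℝ) / (n : ℝ)) * Real.log η +
        ((K : ℝ) / (n : ℝ)) * Real.log ((d : ℝ) / (K : ℝ)) +
        (1 / (n : ℝ)) * Real.log ((d : ℝ)⁻¹ • (X * Xᵀ)).det := by
  have hG : (X * Xᵀ).PosDef := posDef_mul_transpose_of_rank_eq_card (by simpa using hX)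
  have hGdet := hG.det_pos
  have hK : (K : ℝ) ≠ 0 := by positivity
  have hd : (d : ℝ) ≠ 0 := by have : 0 < d := hK1.trans hKd; positivity
  have hn0 : (0 : ℝ) < n := by exact_mod_cast hn
  obtain ⟨hpos, hle⟩ := det_mul_OmegaS_mul_transpose_le hG hη0 hη1 hK1 hKd hScard
  have hlog := Real.log_le_log hpos hle
  rw [Real.log_mul (by positivity) (by positivity), Real.log_mul (by positivity) hGdet.ne',
    Real.log_pow, Real.log_pow, Real.log_div hη0.ne' hd, Real.log_div hd (by positivity),
    Real.log_mul hK hη0.ne'] at hlog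
  rw [det_smul, Fintype.card_fin, Real.log_mul (by positivity) hGdet.ne', Real.log_pow,
    Real.log_inv, Real.log_div hd hK]
  field_simp
  linarith

/-- the log-determinant bound
`(1/n)·log det(X Ω_S Xᵀ) ≤ (1 − K/n)·log η + (K/n)·log(d/K) + (1/n)·log det(X Xᵀ/d)`. -/
theorem stmt_17 {n d : ℕ} (hn : 1 ≤ n) (hnd : n ≤ d)
    (X : Matrix (Fin n) (Fin d) ℝ) (hX : X.rank = n)
    (η : ℝ) (hη0 : 0 < η) (hη1 : η ≤ 1)
    (K : ℕ) (hK1 : 1 ≤ K) (hKd : K ≤ d)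
    (S : Finset (Fin d)) (hScard : S.card = K) :
    (1 / (n : ℝ)) * Real.log (X * OmegaS η K S * Xᵀ).det ≤
      (1 - (K : ℝ) / (n : ℝ)) * Real.log η +
        ((K : ℝ) / (n : ℝ)) * Real.log ((d : ℝ) / (K : ℝ)) +
        (1 / (n : ℝ)) * Real.log ((d : ℝ)⁻¹ • (X * Xᵀ)).det :=
  stmt_17_general hn X hX η hη0 hη1 K hK1 hKd S hScard
end
end
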